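/- Combinatorial lemma (single-place case): Let n ≥ 2 be even and μ₁ ≥ μ₂ ≥ ⋯ ≥ μ_{n-1} ≥ |μ_n| ≥ 1 be integers and d ∈ ℤ. Then the inequalities 1 - |μ_n| ≤ -(n+d) ≤ |μ_n| - 1 hold if and only if there exists a balanced Kostant representative w ∈ {w⁺, w⁻} such that w⁻¹ · (d e₀ + Σ μ_j e_j) is a dominant integral weight for D_{n+1}, i.e., its coordinates (λ₀,...,λ_n) satisfy λ₀ ≥ λ₁ ≥ ⋯ ≥ λ_{n-1} ≥ |λ_n|. -/

import Mathlib

/-- `(w⁺)⁻¹`: `e_{i+1} ↦ e_i` for `0 ≤ i ≤ n-1`, `e₀ ↦ e_n`, acting on `ℤ^{n+1}`. -/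
def winvPlus (n : ℕ) : (Fin (n+1) → ℤ) → (Fin (n+1) → ℤ) :=
  fun v j => if h : (j : ℕ) = n then v 0
    else v ⟨(j : ℕ) + 1, by have := j.isLt; omega⟩

/-- `(w⁻)⁻¹`: `e_{i+1} ↦ e_i` for `0 ≤ i ≤ n-2`, `e_n ↦ -e_{n-1}`, `e₀ ↦ -e_n`. -/
def winvMinus (n : ℕ) : (Fin (n+1) → ℤ) → (Fin (n+1) → ℤ) :=
  fun v j => if h : (j : ℕ) = n then -(v 0)
    else if h2 : (j : ℕ) = n - 1 then -(v (Fin.last n))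
    else v ⟨(j : ℕ) + 1, by have := j.isLt; omega⟩

/-- `ρ = Σ_{j=0}^{n} (n-j) e_j`. -/
def rhoZ (n : ℕ) : Fin (n+1) → ℤ := fun j => (n : ℤ) - (j : ℕ)

/-- The weight `d e₀ + Σ_{j=1}^n μ_j e_j` as a vector in `ℤ^{n+1}`. -/
def lamvec (n : ℕ) (d : ℤ) (μ : Fin n → ℤ) : Fin (n+1) → ℤ :=
  fun i => if h : (i : ℕ) = 0 then d
    else μ ⟨(i : ℕ) - 1, by have := i.isLt; omega⟩

/-- A weight `(λ₀,…,λ_n)` for `D_{n+1}` is dominant integral if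
`λ₀ ≥ λ₁ ≥ ⋯ ≥ λ_{n-1} ≥ |λ_n|`. -/
def DominantZ (n : ℕ) (l : Fin (n+1) → ℤ) : Prop :=
  (∀ k : Fin n, l k.succ ≤ l k.castSucc) ∧
  |l (Fin.last n)| ≤ l ⟨n - 1, by omega⟩

/-!
Both dotted weights are explicit: `(w⁺)⁻¹ · λ = (μ₁ - 1, …, μ_{n-1} - 1, μ_n - 1, n + d)` and
`(w⁻)⁻¹ · λ = (μ₁ - 1, …, μ_{n-1} - 1, -μ_n - 1, -(n + d))`. The first `n` entries are decreasing
in both cases because `|μ_n| ≤ μ_{n-1}`, so dominance reduces to `|n + d| ≤ μ_n - 1`, resp.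
`|n + d| ≤ -μ_n - 1`, and one of these holds exactly when `|n + d| ≤ |μ_n| - 1`.
-/

theorem Fin.antitone_snoc_iff {α : Type*} [Preorder α] {m : ℕ} {ν : Fin (m + 1) → α} {x : α} :
    Antitone (Fin.snoc ν x : Fin (m + 2) → α) ↔ Antitone ν ∧ x ≤ ν (Fin.last m) := by
  rw [Fin.antitone_iff_succ_le, Fin.antitone_iff_succ_le, Fin.forall_fin_succ']
  simp only [Fin.succ_castSucc, Fin.snoc_castSucc, Fin.succ_last, Fin.snoc_last]

theorem dominantZ_snoc_iff {m : ℕ} (ν : Fin (m + 1) → ℤ) (x : ℤ) :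
    DominantZ (m + 1) (Fin.snoc ν x) ↔ Antitone ν ∧ |x| ≤ ν (Fin.last m) := by
  have hlast : (⟨m + 1 - 1, by omega⟩ : Fin (m + 2)) = (Fin.last m).castSucc := rfl
  rw [DominantZ, ← Fin.antitone_iff_succ_le, Fin.antitone_snoc_iff, hlast, Fin.snoc_last,
    Fin.snoc_castSucc, and_assoc, and_congr_right_iff]
  intro _
  exact ⟨And.right, fun h => ⟨(le_abs_self x).trans h, h⟩⟩

section Coordinates

variable {n m : ℕ} (v : Fin (n + 1) → ℤ) (w : Fin (m + 2) → ℤ)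

theorem winvPlus_last : winvPlus n v (Fin.last n) = v 0 := dif_pos rfl

theorem winvPlus_castSucc (i : Fin n) : winvPlus n v i.castSucc = v i.succ :=
  dif_neg i.is_lt.ne

theorem winvMinus_last : winvMinus n v (Fin.last n) = -v 0 := dif_pos rfl

theorem winvMinus_castSucc_last :
    winvMinus (m + 1) w (Fin.last m).castSucc = -w (Fin.last m).succ :=
  (dif_neg (by simp)).trans (dif_pos (by simp))

theorem winvMinus_castSucc_castSucc (i : Fin m) :
    winvMinus (m + 1) w i.castSucc.castSucc = w i.castSucc.succ :=
  (dif_neg (by simp; omega)).trans (dif_neg (by simp; omega))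

theorem lamvec_zero (d : ℤ) (μ : Fin n → ℤ) : lamvec n d μ 0 = d := dif_pos rfl

theorem lamvec_succ (d : ℤ) (μ : Fin n → ℤ) (i : Fin n) : lamvec n d μ i.succ = μ i :=
  dif_neg (Nat.succ_ne_zero _)

end Coordinates

theorem winvPlus_dot_lamvec (m : ℕ) (d : ℤ) (μ : Fin (m + 1) → ℤ) :
    winvPlus (m + 1) (lamvec (m + 1) d μ + rhoZ (m + 1)) - rhoZ (m + 1) =
      Fin.snoc (Fin.snoc (Fin.init μ - 1) (μ (Fin.last m) - 1)) (((m + 1 : ℕ) : ℤ) + d) := by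
  funext j
  refine Fin.lastCases ?_ (Fin.lastCases ?_ fun i => ?_) j <;>
  simp only [Pi.sub_apply, Pi.add_apply, winvPlus_last, winvPlus_castSucc, lamvec_zero,
    lamvec_succ, rhoZ, Fin.snoc_last, Fin.snoc_castSucc, Fin.init, Pi.one_apply, Fin.val_zero,
    Fin.val_last, Fin.val_succ, Fin.val_castSucc] <;>
  push_cast <;> ring

theorem winvMinus_dot_lamvec (m : ℕ) (d : ℤ) (μ : Fin (m + 1) → ℤ) :
    winvMinus (m + 1) (lamvec (m + 1) d μ + rhoZ (m + 1)) - rhoZ (m + 1) =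
      Fin.snoc (Fin.snoc (Fin.init μ - 1) (-μ (Fin.last m) - 1)) (-(((m + 1 : ℕ) : ℤ) + d)) := by
  funext j
  refine Fin.lastCases ?_ (Fin.lastCases ?_ fun i => ?_) j <;>
  simp only [Pi.sub_apply, Pi.add_apply, winvMinus_last, winvMinus_castSucc_last,
    winvMinus_castSucc_castSucc, lamvec_zero, lamvec_succ, rhoZ, Fin.snoc_last,
    Fin.snoc_castSucc, Fin.init, Pi.one_apply, Fin.val_zero, Fin.val_last, Fin.val_succ,
    Fin.val_castSucc] <;>
  push_cast <;> ring

/-- combinatorial lemma, single-place case: for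
`μ₁ ≥ ⋯ ≥ μ_{n-1} ≥ |μ_n| ≥ 1` and `d ∈ ℤ`, the inequalities
`1 - |μ_n| ≤ -(n+d) ≤ |μ_n| - 1` hold iff there exists a balanced Kostant
representative `w ∈ {w⁺, w⁻}` such that `w⁻¹ · (d e₀ + μ)` is dominant. -/
theorem stmt13 (n : ℕ) (hn : 2 ≤ n) (d : ℤ) (μ : Fin n → ℤ)
    (hmono : ∀ i j : Fin n, i ≤ j → (j : ℕ) + 1 < n → μ j ≤ μ i)
    (hlast : |μ ⟨n - 1, by omega⟩| ≤ μ ⟨n - 2, by omega⟩) :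
    (1 - |μ ⟨n - 1, by omega⟩| ≤ -((n : ℤ) + d) ∧
      -((n : ℤ) + d) ≤ |μ ⟨n - 1, by omega⟩| - 1) ↔
    (DominantZ n (winvPlus n (lamvec n d μ + rhoZ n) - rhoZ n) ∨
     DominantZ n (winvMinus n (lamvec n d μ + rhoZ n) - rhoZ n)) := by
  obtain ⟨m, rfl⟩ : ∃ m, n = m + 1 + 1 := ⟨n - 2, by omega⟩
  have hinit : Antitone (Fin.init μ - 1) := fun i j hij =>
    sub_le_sub_right (hmono i.castSucc j.castSucc hij (by simpa using j.is_le)) 1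
  replace hlast : |μ (Fin.last (m + 1))| ≤ Fin.init μ (Fin.last m) := hlast
  show (1 - |μ (Fin.last (m + 1))| ≤ _ ∧ _ ≤ |μ (Fin.last (m + 1))| - 1) ↔ _
  rw [winvPlus_dot_lamvec, winvMinus_dot_lamvec, dominantZ_snoc_iff, dominantZ_snoc_iff,
    Fin.antitone_snoc_iff, Fin.antitone_snoc_iff, Fin.snoc_last, Fin.snoc_last, abs_neg]
  set a := μ (Fin.last (m + 1))
  -- `|a| - 1 = max (a - 1) (-a - 1)`
  rw [← neg_sub |a| 1, ← abs_le, abs_neg, abs_eq_max_neg (a := a), ← max_sub_sub_right,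
    le_max_iff]
  simp only [hinit, true_and, Pi.sub_apply, Pi.one_apply, sub_le_sub_iff_right,
    (le_abs_self a).trans hlast, (neg_le_abs a).trans hlast]
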